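/- Every real binary cubic form in x, y can be transformed by a real invertible linear change of variables into exactly one of the five canonical forms: y(x − y)x-type, i.e. xy(x−y); x(x² + y²); x²y; x³; 0. -/

import Mathlib

open MvPolynomial

/-- The five canonical real binary cubic forms:
`xy(x−y)`, `x(x²+y²)`, `x²y`, `x³`, `0`. -/
noncomputable def canonicalCubic : Fin 5 → MvPolynomial (Fin 2) ℝ :=
  ![X 0 * X 1 * (X 0 - X 1),
    X 0 * (X 0 ^ 2 + X 1 ^ 2),
    X 0 ^ 2 * X 1,
    X 0 ^ 3,
    0]

/-- `f` is equivalent to `g` by an invertible real linear change of variables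
(allowing a nonzero scalar multiple). -/
def cubicEquiv (f g : MvPolynomial (Fin 2) ℝ) : Prop :=
  ∃ a b c d lam : ℝ, a * d - b * c ≠ 0 ∧ lam ≠ 0 ∧
    aeval ![C a * X 0 + C b * X 1, C c * X 0 + C d * X 1] f = C lam * g

/-!
Every nonzero real cubic form has a real linear factor, since a real cubic has a real root; a change
of variables turns that factor into `x`, so the form becomes `x · q(x, y)` with `q` quadratic.
Completing the square in `q` and rescaling leaves one of `x(x² ± y²)`, `x²y`, `x³`, `0`, and
`x(x² − y²)` is equivalent to `xy(x − y)`.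

A substitution of determinant `Δ` followed by a factor `λ` multiplies the discriminant by
`Δ⁶ / λ⁴ > 0` and the Hessian covariant by `Δ² / λ²`. So the sign of the discriminant, the vanishing
of the Hessian and the vanishing of the form are invariants, and they separate the five canonical
forms.
-/

noncomputable def linSubst (α β γ δ : ℝ) : Fin 2 → MvPolynomial (Fin 2) ℝ :=
  ![C α * X 0 + C β * X 1, C γ * X 0 + C δ * X 1]

theorem aeval_linSubst_aeval_linSubst (α β γ δ α' β' γ' δ' : ℝ) (f : MvPolynomial (Fin 2) ℝ) :
    aeval (linSubst α' β' γ' δ') (aeval (linSubst α β γ δ) f) =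
      aeval (linSubst (α * α' + β * γ') (α * β' + β * δ') (γ * α' + δ * γ') (γ * β' + δ * δ'))
        f := by
  rw [← AlgHom.comp_apply, comp_aeval]
  congr 2
  ext i : 1
  fin_cases i <;> simp [linSubst] <;> ring

theorem linSubst_one_zero_zero_one : linSubst 1 0 0 1 = X := by
  ext i : 1
  fin_cases i <;> simp [linSubst]

theorem aeval_linSubst_inv {α β γ δ : ℝ} (hdet : α * δ - β * γ ≠ 0) (f : MvPolynomial (Fin 2) ℝ) :
    aeval (linSubst (δ / (α * δ - β * γ)) (-β / (α * δ - β * γ)) (-γ / (α * δ - β * γ))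
      (α / (α * δ - β * γ))) (aeval (linSubst α β γ δ) f) = f := by
  rw [aeval_linSubst_aeval_linSubst]
  convert aeval_X_left_apply f
  rw [← linSubst_one_zero_zero_one]
  congr 1 <;> grind

theorem cubicEquiv_iff {f g : MvPolynomial (Fin 2) ℝ} : cubicEquiv f g ↔ ∃ α β γ δ l : ℝ,
    α * δ - β * γ ≠ 0 ∧ l ≠ 0 ∧ aeval (linSubst α β γ δ) f = C l * g := Iff.rfl

namespace cubicEquiv

variable {f g h : MvPolynomial (Fin 2) ℝ}

theorem refl (f : MvPolynomial (Fin 2) ℝ) : cubicEquiv f f :=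
  cubicEquiv_iff.mpr ⟨1, 0, 0, 1, 1, by norm_num, one_ne_zero, by
    rw [linSubst_one_zero_zero_one, aeval_X_left_apply, map_one, one_mul]⟩

theorem trans (hfg : cubicEquiv f g) (hgh : cubicEquiv g h) : cubicEquiv f h := by
  obtain ⟨α, β, γ, δ, l, hdet, hl, hf⟩ := cubicEquiv_iff.mp hfg
  obtain ⟨α', β', γ', δ', l', hdet', hl', hg⟩ := cubicEquiv_iff.mp hgh
  refine cubicEquiv_iff.mpr ⟨α * α' + β * γ', α * β' + β * δ', γ * α' + δ * γ', γ * β' + δ * δ',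
    l * l', ?_, mul_ne_zero hl hl', ?_⟩
  · convert mul_ne_zero hdet hdet' using 1; ring
  · rw [← aeval_linSubst_aeval_linSubst, hf, map_mul, aeval_C, hg, algebraMap_eq, map_mul,
      mul_assoc]

theorem symm (hfg : cubicEquiv f g) : cubicEquiv g f := by
  obtain ⟨α, β, γ, δ, l, hdet, hl, hf⟩ := cubicEquiv_iff.mp hfg
  set Δ := α * δ - β * γ
  refine cubicEquiv_iff.mpr ⟨δ / Δ, -β / Δ, -γ / Δ, α / Δ, l⁻¹, ?_, inv_ne_zero hl, ?_⟩
  · convert inv_ne_zero hdet using 1; field_simp; ring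
  · calc _ = C l⁻¹ * (C l * aeval (linSubst (δ / Δ) (-β / Δ) (-γ / Δ) (α / Δ)) g) := by
          rw [← mul_assoc, ← map_mul, inv_mul_cancel₀ hl, map_one, one_mul]
      _ = C l⁻¹ * f := by
          rw [← aeval_linSubst_inv hdet f, hf, map_mul, aeval_C, algebraMap_eq]

theorem eq_zero (hfg : cubicEquiv f g) (hf : f = 0) : g = 0 := by
  obtain ⟨α, β, γ, δ, l, -, hl, hfg⟩ := cubicEquiv_iff.mp hfg
  rw [hf, map_zero, eq_comm, mul_eq_zero, C_eq_zero] at hfg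
  exact hfg.resolve_left hl

end cubicEquiv

noncomputable def binaryCubic (a b c d : ℝ) : MvPolynomial (Fin 2) ℝ :=
  C a * X 0 ^ 3 + C b * X 0 ^ 2 * X 1 + C c * X 0 * X 1 ^ 2 + C d * X 1 ^ 3

theorem binaryCubic_eq_sum_monomial (a b c d : ℝ) : binaryCubic a b c d =
    monomial (.single 0 3 + .single 1 0) a + monomial (.single 0 2 + .single 1 1) b +
      monomial (.single 0 1 + .single 1 2) c + monomial (.single 0 0 + .single 1 3) d := by
  simp only [binaryCubic, X, monomial_pow, monomial_mul, C_mul_monomial, Finsupp.single_zero,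
    add_zero, zero_add, Finsupp.smul_single, smul_eq_mul, mul_one, one_pow]

theorem isHomogeneous_binaryCubic (a b c d : ℝ) : (binaryCubic a b c d).IsHomogeneous 3 :=
  ((((isHomogeneous_X_pow _ 3).C_mul a).add (((isHomogeneous_X_pow _ 2).C_mul b).mul
    (isHomogeneous_X _ _))).add (((isHomogeneous_X _ _).C_mul c).mul
    (isHomogeneous_X_pow _ 2))).add ((isHomogeneous_X_pow _ 3).C_mul d)

theorem MvPolynomial.IsHomogeneous.exists_eq_binaryCubic {f : MvPolynomial (Fin 2) ℝ}
    (hf : f.IsHomogeneous 3) : ∃ a b c d : ℝ, f = binaryCubic a b c d := by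
  refine ⟨coeff (.single 0 3 + .single 1 0) f, coeff (.single 0 2 + .single 1 1) f,
    coeff (.single 0 1 + .single 1 2) f, coeff (.single 0 0 + .single 1 3) f, ?_⟩
  ext m
  by_cases hm : m.degree = 3
  · rw [Finsupp.degree_eq_sum, Fin.sum_univ_two] at hm
    have hm' : m = .single 0 (m 0) + .single 1 (3 - m 0) := by
      ext i; fin_cases i <;> simp; omega
    have : m 0 < 4 := by omega
    rw [hm']
    interval_cases m 0 <;> simp [binaryCubic_eq_sum_monomial, coeff_monomial, Finsupp.ext_iff,
      Fin.forall_fin_two]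
  · rw [hf.coeff_eq_zero hm, (isHomogeneous_binaryCubic _ _ _ _).coeff_eq_zero hm]

theorem binaryCubic_inj {a b c d a' b' c' d' : ℝ} :
    binaryCubic a b c d = binaryCubic a' b' c' d' ↔ a = a' ∧ b = b' ∧ c = c' ∧ d = d' := by
  refine ⟨fun h => ?_, by rintro ⟨rfl, rfl, rfl, rfl⟩; rfl⟩
  have e : ∀ x y : ℝ, eval ![x, y] (binaryCubic a b c d) = eval ![x, y] (binaryCubic a' b' c' d') :=
    fun x y => by rw [h]
  have e₁ := e 1 0; have e₂ := e 0 1; have e₃ := e 1 1; have e₄ := e 1 (-1)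
  simp [binaryCubic] at e₁ e₂ e₃ e₄
  refine ⟨e₁, ?_, ?_, e₂⟩ <;> linarith

theorem binaryCubic_eq_zero_iff {a b c d : ℝ} :
    binaryCubic a b c d = 0 ↔ a = 0 ∧ b = 0 ∧ c = 0 ∧ d = 0 := by
  rw [← binaryCubic_inj, show binaryCubic 0 0 0 0 = 0 by simp [binaryCubic]]

theorem C_mul_binaryCubic (l a b c d : ℝ) :
    C l * binaryCubic a b c d = binaryCubic (l * a) (l * b) (l * c) (l * d) := by
  simp only [binaryCubic, map_mul]; ring

def cubicValue (a b c d x y : ℝ) : ℝ := a * x ^ 3 + b * x ^ 2 * y + c * x * y ^ 2 + d * y ^ 3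

/-- `(u ∂ₓ + v ∂ᵧ) f` at `(x, y)`, where `f = ax³ + bx²y + cxy² + dy³`. -/
def cubicPolar (a b c d x y u v : ℝ) : ℝ :=
  u * (3 * a * x ^ 2 + 2 * b * x * y + c * y ^ 2) + v * (b * x ^ 2 + 2 * c * x * y + 3 * d * y ^ 2)

/-- Taylor expansion of `f(x p + y q)` with `p = (α, γ)`, `q = (β, δ)`. -/
theorem aeval_linSubst_binaryCubic (α β γ δ a b c d : ℝ) :
    aeval (linSubst α β γ δ) (binaryCubic a b c d) =
      binaryCubic (cubicValue a b c d α γ) (cubicPolar a b c d α γ β δ)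
        (cubicPolar a b c d β δ α γ) (cubicValue a b c d β δ) := by
  simp only [binaryCubic, linSubst, cubicValue, cubicPolar, map_add, map_mul, map_pow,
    aeval_C, aeval_X, Matrix.cons_val_zero, Matrix.cons_val_one, algebraMap_eq, map_ofNat]
  ring

theorem cubicEquiv_binaryCubic_iff {a b c d a' b' c' d' : ℝ} :
    cubicEquiv (binaryCubic a b c d) (binaryCubic a' b' c' d') ↔ ∃ α β γ δ l : ℝ,
      α * δ - β * γ ≠ 0 ∧ l ≠ 0 ∧
        cubicValue a b c d α γ = l * a' ∧ cubicPolar a b c d α γ β δ = l * b' ∧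
        cubicPolar a b c d β δ α γ = l * c' ∧ cubicValue a b c d β δ = l * d' := by
  simp only [cubicEquiv_iff, aeval_linSubst_binaryCubic, C_mul_binaryCubic, binaryCubic_inj]

theorem cubicEquiv_binaryCubic_of {a b c d a' b' c' d' : ℝ} (α β γ δ l : ℝ)
    (hdet : α * δ - β * γ ≠ 0) (hl : l ≠ 0)
    (h : cubicValue a b c d α γ = l * a' ∧ cubicPolar a b c d α γ β δ = l * b' ∧
      cubicPolar a b c d β δ α γ = l * c' ∧ cubicValue a b c d β δ = l * d') :
    cubicEquiv (binaryCubic a b c d) (binaryCubic a' b' c' d') :=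
  cubicEquiv_binaryCubic_iff.mpr ⟨α, β, γ, δ, l, hdet, hl, h⟩

theorem canonicalCubic_zero_eq : canonicalCubic 0 = binaryCubic 0 1 (-1) 0 := by
  simp [canonicalCubic, binaryCubic]; ring

theorem canonicalCubic_one_eq : canonicalCubic 1 = binaryCubic 1 0 1 0 := by
  simp [canonicalCubic, binaryCubic]; ring

theorem canonicalCubic_two_eq : canonicalCubic 2 = binaryCubic 0 1 0 0 := by
  simp [canonicalCubic, binaryCubic]

theorem canonicalCubic_three_eq : canonicalCubic 3 = binaryCubic 1 0 0 0 := by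
  simp [canonicalCubic, binaryCubic]

theorem canonicalCubic_four_eq : canonicalCubic 4 = binaryCubic 0 0 0 0 := by
  simp [canonicalCubic, binaryCubic]

theorem exists_cubicValue_eq_zero {a : ℝ} (ha : a ≠ 0) (b c d : ℝ) :
    ∃ r : ℝ, cubicValue a b c d r 1 = 0 := by
  set p : ℝ → ℝ := fun t => t ^ 3 + b / a * t ^ 2 + c / a * t + d / a
  -- `K` bounds the roots of `p` (a Cauchy bound), so `p` changes sign on `[-K, K]`.
  set K := 1 + |b / a| + |c / a| + |d / a|
  have h₁ := neg_abs_le (b / a); have h₂ := neg_abs_le (c / a); have h₃ := neg_abs_le (d / a)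
  have h₄ := le_abs_self (b / a); have h₅ := le_abs_self (c / a); have h₆ := le_abs_self (d / a)
  have hK : 1 ≤ K := by simp only [K]; linarith
  have hlow : p (-K) ≤ 0 := by simp only [p, K]; nlinarith
  have hhigh : 0 ≤ p K := by simp only [p, K]; nlinarith
  obtain ⟨r, -, hr⟩ := intermediate_value_Icc (by linarith : -K ≤ K)
    (by fun_prop : Continuous p).continuousOn ⟨hlow, hhigh⟩
  refine ⟨r, ?_⟩
  have : cubicValue a b c d r 1 = a * p r := by simp only [cubicValue, p]; field_simp
  rw [this, hr, mul_zero]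

theorem cubicEquiv_binaryCubic_swap (a b c d : ℝ) :
    cubicEquiv (binaryCubic a b c d) (binaryCubic d c b a) :=
  cubicEquiv_binaryCubic_of 0 1 1 0 1 (by norm_num) one_ne_zero <| by
    simp only [cubicValue, cubicPolar]; and_intros <;> ring

theorem cubicEquiv_binaryCubic_shift (a b c d r : ℝ) :
    cubicEquiv (binaryCubic a b c d) (binaryCubic a (3 * a * r + b) (3 * a * r ^ 2 + 2 * b * r + c)
      (cubicValue a b c d r 1)) :=
  cubicEquiv_binaryCubic_of 1 r 0 1 1 (by norm_num) one_ne_zero <| by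
    simp only [cubicValue, cubicPolar]; and_intros <;> ring

theorem cubicEquiv_binaryCubic_completeSquare (a b : ℝ) {c : ℝ} (hc : c ≠ 0) :
    cubicEquiv (binaryCubic a b c 0) (binaryCubic (a - b ^ 2 / (4 * c)) 0 c 0) :=
  cubicEquiv_binaryCubic_of 1 0 (-b / (2 * c)) 1 1 (by norm_num) one_ne_zero <| by
    simp only [cubicValue, cubicPolar]; and_intros <;> field_simp <;> ring

theorem cubicEquiv_binaryCubic_sumSq {S c v : ℝ} (hS : S ≠ 0) (hv : c * v ^ 2 = S) :
    cubicEquiv (binaryCubic S 0 c 0) (canonicalCubic 1) := by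
  subst hv
  have hv₀ : v ≠ 0 := by rintro rfl; simp at hS
  rw [canonicalCubic_one_eq]
  exact cubicEquiv_binaryCubic_of 1 0 0 v _ (by simpa using hv₀) hS <| by
    simp only [cubicValue, cubicPolar]; and_intros <;> ring

theorem cubicEquiv_binaryCubic_diffSq {S c v : ℝ} (hS : S ≠ 0) (hv : c * v ^ 2 = -S) :
    cubicEquiv (binaryCubic S 0 c 0) (canonicalCubic 0) := by
  obtain rfl : S = -(c * v ^ 2) := by linear_combination hv
  have hv₀ : v ≠ 0 := by rintro rfl; simp at hS
  rw [canonicalCubic_zero_eq]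
  -- `x ↦ x - y, y ↦ v(x + y)` sends the factors `x`, `x - y/v`, `x + y/v` to `x - y`, `-2y`, `2x`.
  exact cubicEquiv_binaryCubic_of 1 (-1) v v (4 * (c * v ^ 2)) (by ring_nf; simpa using hv₀)
    (by simpa using hS) <| by
    simp only [cubicValue, cubicPolar]; and_intros <;> ring

theorem cubicEquiv_binaryCubic_sqMul (a : ℝ) {b : ℝ} (hb : b ≠ 0) :
    cubicEquiv (binaryCubic a b 0 0) (canonicalCubic 2) := by
  rw [canonicalCubic_two_eq]
  exact cubicEquiv_binaryCubic_of b 0 (-a) 1 (b ^ 3) (by simpa using hb) (pow_ne_zero 3 hb) <| by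
    simp only [cubicValue, cubicPolar]; and_intros <;> ring

theorem cubicEquiv_binaryCubic_cube {a : ℝ} (ha : a ≠ 0) :
    cubicEquiv (binaryCubic a 0 0 0) (canonicalCubic 3) := by
  rw [canonicalCubic_three_eq]
  exact cubicEquiv_binaryCubic_of 1 0 0 1 a (by norm_num) ha <| by
    simp only [cubicValue, cubicPolar]; and_intros <;> ring

theorem exists_cubicEquiv_binaryCubic_d_eq_zero (a b c d : ℝ) :
    ∃ a' b' c' : ℝ, cubicEquiv (binaryCubic a b c d) (binaryCubic a' b' c' 0) := by
  by_cases ha : a = 0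
  · exact ⟨d, c, b, ha ▸ cubicEquiv_binaryCubic_swap a b c d⟩
  · obtain ⟨r, hr⟩ := exists_cubicValue_eq_zero ha b c d
    exact ⟨_, _, _, hr ▸ cubicEquiv_binaryCubic_shift a b c d r⟩

theorem exists_cubicEquiv_canonicalCubic_of_c_eq_zero (a b : ℝ) :
    ∃ i, cubicEquiv (binaryCubic a b 0 0) (canonicalCubic i) := by
  by_cases hb : b = 0
  · subst hb
    by_cases ha : a = 0
    · exact ⟨4, by rw [ha, canonicalCubic_four_eq]; exact cubicEquiv.refl _⟩
    · exact ⟨3, cubicEquiv_binaryCubic_cube ha⟩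
  · exact ⟨2, cubicEquiv_binaryCubic_sqMul a hb⟩

theorem exists_cubicEquiv_canonicalCubic_of_b_eq_zero (S : ℝ) {c : ℝ} (hc : c ≠ 0) :
    ∃ i, cubicEquiv (binaryCubic S 0 c 0) (canonicalCubic i) := by
  rcases lt_trichotomy (S / c) 0 with h | h | h
  · refine ⟨0, cubicEquiv_binaryCubic_diffSq (v := √(-(S / c))) (by rintro rfl; simp at h) ?_⟩
    rw [Real.sq_sqrt (by linarith)]; field_simp
  · obtain rfl : S = 0 := by simpa [hc] using h
    exact ⟨2, (cubicEquiv_binaryCubic_swap 0 0 c 0).trans (cubicEquiv_binaryCubic_sqMul 0 hc)⟩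
  · refine ⟨1, cubicEquiv_binaryCubic_sumSq (v := √(S / c)) (by rintro rfl; simp at h) ?_⟩
    rw [Real.sq_sqrt h.le]; field_simp

theorem exists_cubicEquiv_canonicalCubic (a b c d : ℝ) :
    ∃ i, cubicEquiv (binaryCubic a b c d) (canonicalCubic i) := by
  obtain ⟨a', b', c', h⟩ := exists_cubicEquiv_binaryCubic_d_eq_zero a b c d
  by_cases hc : c' = 0
  · subst hc
    obtain ⟨i, hi⟩ := exists_cubicEquiv_canonicalCubic_of_c_eq_zero a' b'
    exact ⟨i, h.trans hi⟩
  · obtain ⟨i, hi⟩ := exists_cubicEquiv_canonicalCubic_of_b_eq_zero (a' - b' ^ 2 / (4 * c')) hc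
    exact ⟨i, h.trans ((cubicEquiv_binaryCubic_completeSquare a' b' hc).trans hi)⟩

def cubicDisc (a b c d : ℝ) : ℝ :=
  b ^ 2 * c ^ 2 - 4 * a * c ^ 3 - 4 * b ^ 3 * d - 27 * a ^ 2 * d ^ 2 + 18 * a * b * c * d

/-- The coefficients of the Hessian covariant `(b² − 3ac)x² + (bc − 9ad)xy + (c² − 3bd)y²`, up to
a constant factor; it vanishes exactly when the form is the cube of a linear form. -/
def cubicHessian (a b c d : ℝ) : ℝ × ℝ × ℝ :=
  (b ^ 2 - 3 * a * c, b * c - 9 * a * d, c ^ 2 - 3 * b * d)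

theorem cubicDisc_smul (l a b c d : ℝ) :
    cubicDisc (l * a) (l * b) (l * c) (l * d) = l ^ 4 * cubicDisc a b c d := by
  unfold cubicDisc; ring

theorem cubicDisc_linSubst (α β γ δ a b c d : ℝ) :
    cubicDisc (cubicValue a b c d α γ) (cubicPolar a b c d α γ β δ)
      (cubicPolar a b c d β δ α γ) (cubicValue a b c d β δ) =
      (α * δ - β * γ) ^ 6 * cubicDisc a b c d := by
  unfold cubicDisc cubicValue cubicPolar; ring

theorem cubicHessian_smul (l a b c d : ℝ) :
    cubicHessian (l * a) (l * b) (l * c) (l * d) = l ^ 2 • cubicHessian a b c d := by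
  simp only [cubicHessian, Prod.smul_mk, smul_eq_mul, Prod.mk.injEq]
  and_intros <;> ring

theorem cubicHessian_linSubst_eq_zero {a b c d : ℝ} (h : cubicHessian a b c d = 0)
    (α β γ δ : ℝ) :
    cubicHessian (cubicValue a b c d α γ) (cubicPolar a b c d α γ β δ)
      (cubicPolar a b c d β δ α γ) (cubicValue a b c d β δ) = 0 := by
  simp only [cubicHessian, Prod.mk_eq_zero] at h ⊢
  obtain ⟨hP, hQ, hR⟩ := h
  unfold cubicValue cubicPolar
  refine ⟨?_, ?_, ?_⟩
  · linear_combination (α * δ - β * γ) ^ 2 * (α ^ 2 * hP + α * γ * hQ + γ ^ 2 * hR)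
  · linear_combination (α * δ - β * γ) ^ 2 *
      (2 * α * β * hP + (α * δ + β * γ) * hQ + 2 * γ * δ * hR)
  · linear_combination (α * δ - β * γ) ^ 2 * (β ^ 2 * hP + β * δ * hQ + δ ^ 2 * hR)

namespace cubicEquiv

variable {a b c d a' b' c' d' : ℝ}

theorem sign_cubicDisc_eq (h : cubicEquiv (binaryCubic a b c d) (binaryCubic a' b' c' d')) :
    SignType.sign (cubicDisc a' b' c' d') = SignType.sign (cubicDisc a b c d) := by
  obtain ⟨α, β, γ, δ, l, hdet, hl, hA, hB, hC, hD⟩ := cubicEquiv_binaryCubic_iff.mp h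
  have key : l ^ 4 * cubicDisc a' b' c' d' = (α * δ - β * γ) ^ 6 * cubicDisc a b c d := by
    rw [← cubicDisc_smul, ← hA, ← hB, ← hC, ← hD, cubicDisc_linSubst]
  have := congrArg SignType.sign key
  rwa [sign_mul, sign_mul, sign_pos ((by decide : Even 4).pow_pos hl),
    sign_pos ((by decide : Even 6).pow_pos hdet), one_mul, one_mul] at this

theorem cubicHessian_eq_zero (h : cubicEquiv (binaryCubic a b c d) (binaryCubic a' b' c' d'))
    (hH : cubicHessian a b c d = 0) : cubicHessian a' b' c' d' = 0 := by
  obtain ⟨α, β, γ, δ, l, -, hl, hA, hB, hC, hD⟩ := cubicEquiv_binaryCubic_iff.mp h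
  have : l ^ 2 • cubicHessian a' b' c' d' = 0 := by
    rw [← cubicHessian_smul, ← hA, ← hB, ← hC, ← hD, cubicHessian_linSubst_eq_zero hH]
  exact (smul_eq_zero.mp this).resolve_left (pow_ne_zero 2 hl)

end cubicEquiv

open Classical in
noncomputable def cubicClass (a b c d : ℝ) : Fin 5 :=
  if SignType.sign (cubicDisc a b c d) = 1 then 0
  else if SignType.sign (cubicDisc a b c d) = -1 then 1
  else if binaryCubic a b c d = 0 then 4
  else if cubicHessian a b c d = 0 then 3
  else 2

theorem cubicClass_eq_of_cubicEquiv {a b c d a' b' c' d' : ℝ}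
    (h : cubicEquiv (binaryCubic a b c d) (binaryCubic a' b' c' d')) :
    cubicClass a' b' c' d' = cubicClass a b c d := by
  have hzero : binaryCubic a' b' c' d' = 0 ↔ binaryCubic a b c d = 0 :=
    ⟨h.symm.eq_zero, h.eq_zero⟩
  have hhess : cubicHessian a' b' c' d' = 0 ↔ cubicHessian a b c d = 0 :=
    ⟨h.symm.cubicHessian_eq_zero, h.cubicHessian_eq_zero⟩
  simp only [cubicClass, h.sign_cubicDisc_eq, hzero, hhess]

theorem cubicClass_eq_of_cubicEquiv_canonicalCubic {a b c d : ℝ} {i : Fin 5}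
    (h : cubicEquiv (binaryCubic a b c d) (canonicalCubic i)) : cubicClass a b c d = i := by
  fin_cases i <;>
    simp only [Fin.zero_eta, Fin.mk_one, Fin.reduceFinMk, canonicalCubic_zero_eq,
      canonicalCubic_one_eq, canonicalCubic_two_eq, canonicalCubic_three_eq,
      canonicalCubic_four_eq] at h <;>
    rw [← cubicClass_eq_of_cubicEquiv h] <;>
    norm_num [cubicClass, cubicDisc, cubicHessian, binaryCubic_eq_zero_iff,
      show (0 : SignType) ≠ -1 by decide] <;> rfl

/-- Every real binary cubic form is equivalent, under an invertible real linear
change of variables, to exactly one of the five canonical forms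
`xy(x−y)`, `x(x²+y²)`, `x²y`, `x³`, `0`. -/
theorem binary_cubic_classification
    (f : MvPolynomial (Fin 2) ℝ) (hf : f.IsHomogeneous 3) :
    ∃! i : Fin 5, cubicEquiv f (canonicalCubic i) := by
  obtain ⟨a, b, c, d, rfl⟩ := hf.exists_eq_binaryCubic
  obtain ⟨i, hi⟩ := exists_cubicEquiv_canonicalCubic a b c d
  exact ⟨i, hi, fun j hj => (cubicClass_eq_of_cubicEquiv_canonicalCubic hj).symm.trans
    (cubicClass_eq_of_cubicEquiv_canonicalCubic hi)⟩
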